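/- arXiv:math/0503203 — 5 statements merged into one kernel-verified Lean document; each statement's English description precedes it below -/
import Mathlib

section
/- Let e = uv be an edge of G, and set J = (uv) and K = I(G∖e) in R. Let H = G∖(N(u)∪N(v)) (note that u ∈ N(v) and v ∈ N(u), so u and v are among the deleted vertices). Then J ∩ K = (uv)·(P + I(H)), where P is the ideal of R generated by the variables in (N(u)∪N(v))∖{u,v}; equivalently, (uv) ∩ I(G∖e) is the ideal generated by the monomials uvw for w ∈ (N(u)∪N(v))∖{u,v} together with the monomials uv·x_i x_j for all edges {x_i,x_j} of H. -/
open MvPolynomial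

variable {V : Type*}

/-- The graph obtained from `G` by deleting the vertices in `S`
(and all edges incident to them). -/
def delVerts (G : SimpleGraph V) (S : Set V) : SimpleGraph V where
  Adj x y := G.Adj x y ∧ x ∉ S ∧ y ∉ S
  symm := ⟨fun _ _ h => ⟨h.1.symm, h.2.2, h.2.1⟩⟩
  loopless := ⟨fun _ h => G.irrefl h.1⟩

/-- The edge ideal of a simple graph `G`, generated by the monomials
`X x * X y` over the edges of `G`. -/
noncomputable def edgeIdeal (k : Type*) [Field k] (G : SimpleGraph V) :
    Ideal (MvPolynomial V k) :=
  Ideal.span {m | ∃ x y, G.Adj x y ∧ m = X x * X y}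

/-!
All ideals in sight are squarefree monomial ideals, so membership of a polynomial is decided
monomial by monomial on the supports of its exponent vectors, and the intersection of two such
ideals is read off from the supports alone. The theorem thereby reduces to a statement about a
vertex set `S` containing `u` and `v`: `S` contains an edge of `G` other than `uv` iff it contains
a neighbour `w ∉ {u, v}` of `u` or `v`, or an edge of `G` avoiding `N(u) ∪ N(v)`. The other
description of the intersection comes from multiplying out `(uv) * (P + I(H))` on generators.
-/

theorem Finset.prod_insert_insert {ι M : Type*} [CommMonoid M] [DecidableEq ι] {a b : ι}
    {s : Finset ι} (hab : a ≠ b) (ha : a ∉ s) (hb : b ∉ s) (f : ι → M) :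
    ∏ i ∈ insert a (insert b s), f i = f a * f b * ∏ i ∈ s, f i := by
  rw [Finset.prod_insert (by simp [hab, ha]), Finset.prod_insert hb, mul_assoc]

theorem Ideal.span_singleton_mul_sup_span {R : Type*} [CommSemiring R] (a : R) (A B : Set R) :
    Ideal.span {a} * (Ideal.span A ⊔ Ideal.span B) =
      Ideal.span ((a * ·) '' A ∪ (a * ·) '' B) := by
  rw [← Ideal.span_union, Ideal.span_mul_span', Set.singleton_mul, Set.image_union]

section SquarefreeMonomials

variable {σ R : Type*} [CommSemiring R]

theorem Finset.sum_single_one_le_iff [DecidableEq σ] {s : Finset σ} {d : σ →₀ ℕ} :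
    ∑ i ∈ s, Finsupp.single i 1 ≤ d ↔ s ⊆ d.support := by
  simp only [Finsupp.le_def, Finsupp.finsetSum_apply, Finsupp.single_apply,
    Finset.sum_ite_eq', Finset.subset_iff, Finsupp.mem_support_iff]
  refine forall_congr' fun i => ?_
  split_ifs with hi <;> simp [hi, Nat.one_le_iff_ne_zero]

theorem MvPolynomial.prod_X_eq_monomial (s : Finset σ) :
    ∏ i ∈ s, (X i : MvPolynomial σ R) = monomial (∑ i ∈ s, Finsupp.single i 1) 1 :=
  (monomial_sum_one s _).symm

theorem MvPolynomial.mem_span_prod_X_image [DecidableEq σ] {p : MvPolynomial σ R}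
    {F : Set (Finset σ)} :
    p ∈ Ideal.span ((fun s => ∏ i ∈ s, X i) '' F) ↔
      ∀ d ∈ p.support, ∃ s ∈ F, s ⊆ d.support := by
  have h := mem_ideal_span_monomial_image (x := p)
    (s := (fun s => ∑ i ∈ s, Finsupp.single i 1) '' F)
  simp only [Set.image_image, ← prod_X_eq_monomial] at h
  simp [h, Finset.sum_single_one_le_iff]

theorem MvPolynomial.span_prod_X_image_inf [DecidableEq σ] {F F' F'' : Set (Finset σ)}
    (h : ∀ S : Finset σ,
      ((∃ s ∈ F, s ⊆ S) ∧ ∃ s ∈ F', s ⊆ S) ↔ ∃ s ∈ F'', s ⊆ S) :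
    Ideal.span ((fun s => ∏ i ∈ s, (X i : MvPolynomial σ R)) '' F) ⊓
        Ideal.span ((fun s => ∏ i ∈ s, X i) '' F') =
      Ideal.span ((fun s => ∏ i ∈ s, X i) '' F'') := by
  ext p
  simp only [Submodule.mem_inf, mem_span_prod_X_image, ← h, ← forall₂_and]

end SquarefreeMonomials

theorem edgeIdeal_eq_span_prod_X (k : Type*) [Field k] [DecidableEq V] (G : SimpleGraph V) :
    edgeIdeal k G =
      Ideal.span ((fun s => ∏ i ∈ s, X i) '' {s | ∃ x y, G.Adj x y ∧ s = {x, y}}) := by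
  refine congrArg Ideal.span (Set.ext fun m => ?_)
  simp only [Set.mem_image, Set.mem_ofPred_eq]
  constructor
  · rintro ⟨x, y, hxy, rfl⟩
    exact ⟨{x, y}, ⟨x, y, hxy, rfl⟩, Finset.prod_pair hxy.ne⟩
  · rintro ⟨_, ⟨x, y, hxy, rfl⟩, rfl⟩
    exact ⟨x, y, hxy, Finset.prod_pair hxy.ne⟩

theorem exists_adj_deleteEdges_iff (G : SimpleGraph V) {u v : V} (huv : G.Adj u v) {S : Set V}
    (hu : u ∈ S) (hv : v ∈ S) :
    (∃ a b, (G.deleteEdges {s(u, v)}).Adj a b ∧ a ∈ S ∧ b ∈ S) ↔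
      (∃ w ∈ (G.neighborSet u ∪ G.neighborSet v) \ {u, v}, w ∈ S) ∨
        ∃ x y, (delVerts G (G.neighborSet u ∪ G.neighborSet v)).Adj x y ∧
          x ∈ S ∧ y ∈ S := by
  set N := G.neighborSet u ∪ G.neighborSet v
  have huN : u ∈ N := Or.inr huv.symm
  have hvN : v ∈ N := Or.inl huv
  simp only [SimpleGraph.deleteEdges_adj, Set.mem_singleton_iff]
  constructor
  · rintro ⟨a, b, ⟨hab, hne⟩, ha, hb⟩
    by_cases haw : a ∈ N \ {u, v}
    · exact Or.inl ⟨a, haw, ha⟩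
    by_cases hbw : b ∈ N \ {u, v}
    · exact Or.inl ⟨b, hbw, hb⟩
    have h_eq_of_mem : ∀ {a b}, G.Adj a b → a ∉ N \ {u, v} → b ∉ N \ {u, v} →
        a ∈ N → s(a, b) = s(u, v) := by
      intro a b hab haw hbw haN
      have ha' : a = u ∨ a = v := not_not.mp fun h => haw ⟨haN, h⟩
      have hbN : b ∈ N := by rcases ha' with rfl | rfl <;> simp [N, hab]
      have hb' : b = u ∨ b = v := not_not.mp fun h => hbw ⟨hbN, h⟩
      have := hab.ne
      rw [Sym2.eq_iff]
      grind
    have haN : a ∉ N := fun haN => hne (h_eq_of_mem hab haw hbw haN)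
    have hbN : b ∉ N := fun hbN => hne (Sym2.eq_swap.trans (h_eq_of_mem hab.symm hbw haw hbN))
    exact Or.inr ⟨a, b, ⟨hab, haN, hbN⟩, ha, hb⟩
  · rintro (⟨w, ⟨hwu | hwv, hw⟩, hwS⟩ | ⟨x, y, ⟨hxy, hx, hy⟩, hxS, hyS⟩)
    · refine ⟨u, w, ⟨hwu, ?_⟩, hu, hwS⟩
      simp_all
    · refine ⟨v, w, ⟨hwv, ?_⟩, hv, hwS⟩
      simp_all
    · refine ⟨x, y, ⟨hxy, ?_⟩, hxS, hyS⟩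
      rw [Sym2.eq_iff]
      rintro (⟨rfl, rfl⟩ | ⟨rfl, rfl⟩) <;> contradiction

theorem setOf_X_mul_X_mul_eq_image_prod_X (k : Type*) [Field k] [DecidableEq V]
    (G : SimpleGraph V) {u v : V} (huv : u ≠ v) {N : Set V} (huN : u ∈ N) (hvN : v ∈ N) :
    ({m | ∃ w ∈ N \ {u, v}, m = X u * X v * X w} ∪
      {m | ∃ x y, (delVerts G N).Adj x y ∧ m = X u * X v * (X x * X y)} :
        Set (MvPolynomial V k)) =
      (fun s => ∏ i ∈ s, X i) '' ({s | ∃ w ∈ N \ {u, v}, s = {u, v, w}} ∪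
        {s | ∃ x y, (delVerts G N).Adj x y ∧ s = {u, v, x, y}}) := by
  have h_uvw : ∀ w ∉ ({u, v} : Set V),
      ∏ i ∈ {u, v, w}, X i = (X u * X v * X w : MvPolynomial V k) := fun w hw => by
    rw [Finset.prod_insert_insert huv (by simp_all [eq_comm]) (by simp_all [eq_comm]),
      Finset.prod_singleton]
  have h_uvxy : ∀ x y, (delVerts G N).Adj x y →
      ∏ i ∈ {u, v, x, y}, X i = (X u * X v * (X x * X y) : MvPolynomial V k) :=
    fun x y ⟨hxy, hx, hy⟩ => by
      rw [Finset.prod_insert_insert huv (by grind) (by grind), Finset.prod_pair hxy.ne]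
  rw [Set.image_union]
  congr 1 <;> ext m <;> simp only [Set.mem_image, Set.mem_ofPred_eq]
  · constructor
    · rintro ⟨w, hw, rfl⟩
      exact ⟨_, ⟨w, hw, rfl⟩, h_uvw w hw.2⟩
    · rintro ⟨_, ⟨w, hw, rfl⟩, rfl⟩
      exact ⟨w, hw, h_uvw w hw.2⟩
  · constructor
    · rintro ⟨x, y, hxy, rfl⟩
      exact ⟨_, ⟨x, y, hxy, rfl⟩, h_uvxy x y hxy⟩
    · rintro ⟨_, ⟨x, y, hxy, rfl⟩, rfl⟩
      exact ⟨x, y, hxy, h_uvxy x y hxy⟩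

theorem span_X_mul_X_inf_edgeIdeal_deleteEdges (k : Type*) [Field k] [DecidableEq V]
    (G : SimpleGraph V) {u v : V} (huv : G.Adj u v) :
    Ideal.span {(X u * X v : MvPolynomial V k)} ⊓ edgeIdeal k (G.deleteEdges {s(u, v)}) =
      Ideal.span
        ({m | ∃ w ∈ (G.neighborSet u ∪ G.neighborSet v) \ {u, v}, m = X u * X v * X w} ∪
         {m | ∃ x y, (delVerts G (G.neighborSet u ∪ G.neighborSet v)).Adj x y ∧
            m = X u * X v * (X x * X y)}) := by
  have h_uv : ({X u * X v} : Set (MvPolynomial V k)) = (fun s => ∏ i ∈ s, X i) '' {{u, v}} := by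
    rw [Set.image_singleton, Finset.prod_pair huv.ne]
  rw [h_uv, edgeIdeal_eq_span_prod_X,
    setOf_X_mul_X_mul_eq_image_prod_X k G huv.ne (Or.inr huv.symm) (Or.inl huv)]
  refine MvPolynomial.span_prod_X_image_inf fun S => ?_
  simp only [Set.mem_singleton_iff, exists_eq_left, Set.mem_union, Set.mem_ofPred_eq]
  constructor
  · rintro ⟨huvS, _, ⟨a, b, hab, rfl⟩, habS⟩
    simp only [Finset.insert_subset_iff, Finset.singleton_subset_iff] at huvS habS ⊢
    rcases (exists_adj_deleteEdges_iff G huv (S := S) huvS.1 huvS.2).1 ⟨a, b, hab, habS⟩ with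
      ⟨w, hw, hwS⟩ | ⟨x, y, hxy, hxyS⟩
    · exact ⟨_, Or.inl ⟨w, hw, rfl⟩, by simpa [Finset.insert_subset_iff, huvS] using hwS⟩
    · exact ⟨_, Or.inr ⟨x, y, hxy, rfl⟩,
        by simpa [Finset.insert_subset_iff, huvS] using hxyS⟩
  · rintro ⟨_, ⟨w, hw, rfl⟩ | ⟨x, y, hxy, rfl⟩, hS⟩ <;>
      simp only [Finset.insert_subset_iff, Finset.singleton_subset_iff] at hS ⊢ <;>
      refine ⟨⟨hS.1, hS.2.1⟩, ?_⟩
    · obtain ⟨a, b, hab, habS⟩ :=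
        (exists_adj_deleteEdges_iff G huv (S := S) hS.1 hS.2.1).2 (Or.inl ⟨w, hw, hS.2.2⟩)
      exact ⟨_, ⟨a, b, hab, rfl⟩, by simpa [Finset.insert_subset_iff] using habS⟩
    · obtain ⟨a, b, hab, habS⟩ :=
        (exists_adj_deleteEdges_iff G huv (S := S) hS.1 hS.2.1).2 (Or.inr ⟨x, y, hxy, hS.2.2⟩)
      exact ⟨_, ⟨a, b, hab, rfl⟩, by simpa [Finset.insert_subset_iff] using habS⟩

theorem span_X_mul_X_mul_sup_edgeIdeal (k : Type*) [Field k] (u v : V) (P : Set V)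
    (H : SimpleGraph V) :
    Ideal.span {(X u * X v : MvPolynomial V k)} * (Ideal.span (X '' P) + edgeIdeal k H) =
      Ideal.span ({m | ∃ w ∈ P, m = X u * X v * X w} ∪
        {m | ∃ x y, H.Adj x y ∧ m = X u * X v * (X x * X y)}) := by
  rw [Submodule.add_eq_sup, edgeIdeal, Ideal.span_singleton_mul_sup_span, Set.image_image]
  congr 2 <;> ext m <;> simp [eq_comm]

theorem stmt0_general (k : Type*) [Field k] [DecidableEq V]
    (G : SimpleGraph V) (u v : V) (huv : G.Adj u v) :
    (Ideal.span {(X u * X v : MvPolynomial V k)} ⊓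
        edgeIdeal k (G.deleteEdges {s(u, v)}) =
      Ideal.span {(X u * X v : MvPolynomial V k)} *
        (Ideal.span ((fun w => (X w : MvPolynomial V k)) ''
            ((G.neighborSet u ∪ G.neighborSet v) \ {u, v})) +
          edgeIdeal k (delVerts G (G.neighborSet u ∪ G.neighborSet v)))) ∧
    (Ideal.span {(X u * X v : MvPolynomial V k)} ⊓
        edgeIdeal k (G.deleteEdges {s(u, v)}) =
      Ideal.span
        ({m | ∃ w ∈ (G.neighborSet u ∪ G.neighborSet v) \ {u, v},
            m = (X u * X v * X w : MvPolynomial V k)} ∪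
         {m | ∃ x y, (delVerts G (G.neighborSet u ∪ G.neighborSet v)).Adj x y ∧
            m = (X u * X v * (X x * X y) : MvPolynomial V k)})) := by
  have h := span_X_mul_X_inf_edgeIdeal_deleteEdges k G huv
  exact ⟨h.trans (span_X_mul_X_mul_sup_edgeIdeal k u v _ _).symm, h⟩

/-- if `e = uv` is an edge of `G`, `J = (uv)`, `K = I(G \ e)`,
and `H = G \ (N(u) ∪ N(v))`, then `J ∩ K = (uv) * (P + I(H))` where `P` is
generated by the variables in `(N(u) ∪ N(v)) \ {u, v}`; equivalently,
`J ∩ K` is generated by the monomials `uvw` for `w ∈ (N(u) ∪ N(v)) \ {u, v}`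
together with the monomials `uv * x * y` over the edges `xy` of `H`. -/
theorem stmt0 (k : Type*) [Field k] [Fintype V] [DecidableEq V]
    (G : SimpleGraph V) (u v : V) (huv : G.Adj u v) :
    (Ideal.span {(X u * X v : MvPolynomial V k)} ⊓
        edgeIdeal k (G.deleteEdges {s(u, v)}) =
      Ideal.span {(X u * X v : MvPolynomial V k)} *
        (Ideal.span ((fun w => (X w : MvPolynomial V k)) ''
            ((G.neighborSet u ∪ G.neighborSet v) \ {u, v})) +
          edgeIdeal k (delVerts G (G.neighborSet u ∪ G.neighborSet v)))) ∧
    (Ideal.span {(X u * X v : MvPolynomial V k)} ⊓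
        edgeIdeal k (G.deleteEdges {s(u, v)}) =
      Ideal.span
        ({m | ∃ w ∈ (G.neighborSet u ∪ G.neighborSet v) \ {u, v},
            m = (X u * X v * X w : MvPolynomial V k)} ∪
         {m | ∃ x y, (delVerts G (G.neighborSet u ∪ G.neighborSet v)).Adj x y ∧
            m = (X u * X v * (X x * X y) : MvPolynomial V k)})) :=
  stmt0_general k G u v huv
end

section
/- Suppose G has at least two edges (so that I(G∖e) ≠ (0) for every edge e of G). An edge e = uv of G is a splitting edge of G if and only if N(u) ⊆ N(v)∪{v} or N(v) ⊆ N(u)∪{u}. -/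
open MvPolynomial

variable {V : Type*}

/-- A (monic) monomial in a multivariate polynomial ring. -/
def IsMonomial {k : Type*} [Field k] (m : MvPolynomial V k) : Prop :=
  ∃ s : V →₀ ℕ, m = monomial s 1

/-- A monomial ideal: an ideal generated by a set of (monic) monomials. -/
def IsMonomialIdeal {k : Type*} [Field k] (I : Ideal (MvPolynomial V k)) : Prop :=
  ∃ S : Set (MvPolynomial V k), (∀ m ∈ S, IsMonomial m) ∧ I = Ideal.span S

/-- The set of minimal (monic) monomial generators of a monomial ideal `I`:
monomials `m ∈ I` such that no proper monomial divisor of `m` lies in `I`. -/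
def minGens {k : Type*} [Field k] (I : Ideal (MvPolynomial V k)) :
    Set (MvPolynomial V k) :=
  {m | IsMonomial m ∧ m ∈ I ∧
    ∀ m' : MvPolynomial V k, IsMonomial m' → m' ∣ m → m' ≠ m → m' ∉ I}

/-- `L` is the (monic) least common multiple of the set of monomials `S`. -/
def IsLcmOf {k : Type*} [Field k] (S : Set (MvPolynomial V k))
    (L : MvPolynomial V k) : Prop :=
  IsMonomial L ∧ (∀ m ∈ S, m ∣ L) ∧
    ∀ L' : MvPolynomial V k, IsMonomial L' → (∀ m ∈ S, m ∣ L') → L ∣ L'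

/-- Eliahou–Kervaire splitting: `I = J + K` is a splitting of `I` if `J` and `K`
are nonzero monomial ideals with `I = J + K`, `G(I)` is the disjoint union of
`G(J)` and `G(K)`, and there is a splitting function `w ↦ (φ w, ψ w)` with
`w = lcm(φ w, ψ w)` for every `w ∈ G(J ∩ K)` and, for every nonempty
`S ⊆ G(J ∩ K)`, both `lcm(φ S)` and `lcm(ψ S)` strictly divide `lcm S`. -/
def IsSplitting {k : Type*} [Field k] (I J K : Ideal (MvPolynomial V k)) : Prop :=
  IsMonomialIdeal J ∧ IsMonomialIdeal K ∧ J ≠ ⊥ ∧ K ≠ ⊥ ∧ I = J + K ∧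
  minGens I = minGens J ∪ minGens K ∧ Disjoint (minGens J) (minGens K) ∧
  ∃ φ ψ : MvPolynomial V k → MvPolynomial V k,
    (∀ w ∈ minGens (J ⊓ K), φ w ∈ minGens J ∧ ψ w ∈ minGens K ∧
        IsLcmOf {φ w, ψ w} w) ∧
    (∀ S ⊆ minGens (J ⊓ K), S.Nonempty →
      ∀ L Lφ Lψ : MvPolynomial V k, IsLcmOf S L → IsLcmOf (φ '' S) Lφ →
        IsLcmOf (ψ '' S) Lψ → (Lφ ∣ L ∧ Lφ ≠ L) ∧ (Lψ ∣ L ∧ Lψ ≠ L))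


/-!
Write `J = (x_u x_v)` and `K = I(G ∖ uv)`. Every minimal generator of `J ∩ K` is `lcm(uv, xy)`
for an edge `xy ≠ uv`, and the splitting function is forced to have `φ` constantly `uv`.

If `N(u) ⊆ N(v) ∪ {v}`, each such generator can be written as `lcm(uv, xy)` with `u ∉ {x, y}`
(replace `uy` by `vy`), so `ψ` can be chosen with values free of `x_u`: then `lcm ψ(S)` misses
`x_u` while `lcm S` does not, and `lcm φ(S) = uv` properly divides `lcm S`.

Conversely, if `a ∈ N(u) ∖ N[v]` and `b ∈ N(v) ∖ N[u]`, then `uva` and `uvb` are minimal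
generators of `J ∩ K`, `ψ` must send them to `ua` and `vb`, and `lcm(ua, vb) = lcm(uva, uvb)`
violates the strictness condition.
-/

theorem minimal_exists_le_imp_mem {α : Type*} [PartialOrder α] {A : Set α} {t : α}
    (ht : Minimal (fun t => ∃ a ∈ A, a ≤ t) t) : t ∈ A := by
  obtain ⟨a, ha, hat⟩ := ht.prop
  rwa [le_antisymm (ht.le_of_le ⟨a, ha, le_rfl⟩ hat) hat]

theorem minimal_exists_le_iff {α : Type*} [PartialOrder α] {A : Set α} {t : α}
    (hA : IsAntichain (· ≤ ·) A) : Minimal (fun t => ∃ a ∈ A, a ≤ t) t ↔ t ∈ A := by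
  refine ⟨minimal_exists_le_imp_mem, fun ht => ⟨⟨t, ht, le_rfl⟩, ?_⟩⟩
  rintro s ⟨a, ha, has⟩ hst
  rwa [hA.eq ha ht (has.trans hst)] at has

theorem Finsupp.isAntichain_setOf_degree_eq {σ : Type*} (n : ℕ) :
    IsAntichain (· ≤ ·) {t : σ →₀ ℕ | t.degree = n} := by
  rintro s hs t ht hne hst
  obtain ⟨d, rfl⟩ := le_iff_exists_add.mp hst
  have hd : d.degree = 0 := by
    simp only [Set.mem_ofPred_eq, map_add] at hs ht
    omega
  exact hne (by rw [(Finsupp.degree_eq_zero_iff d).mp hd, add_zero])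

section Monomial

variable {k : Type*} [Field k]

theorem monomial_one_injective : Function.Injective fun s : V →₀ ℕ => monomial s (1 : k) :=
  monomial_left_injective one_ne_zero

theorem IsMonomial.eq_of_dvd_of_dvd {m m' : MvPolynomial V k} (hm : IsMonomial m)
    (hm' : IsMonomial m') (h : m ∣ m') (h' : m' ∣ m) : m = m' := by
  obtain ⟨s, rfl⟩ := hm
  obtain ⟨t, rfl⟩ := hm'
  rw [le_antisymm (monomial_one_dvd_monomial_one.mp h) (monomial_one_dvd_monomial_one.mp h')]

theorem IsLcmOf.unique {S : Set (MvPolynomial V k)} {L L' : MvPolynomial V k}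
    (h : IsLcmOf S L) (h' : IsLcmOf S L') : L = L' :=
  h.1.eq_of_dvd_of_dvd h'.1 (h.2.2 L' h'.1 h'.2.1) (h'.2.2 L h.1 h.2.1)

theorem isLcmOf_singleton {m : MvPolynomial V k} (hm : IsMonomial m) : IsLcmOf {m} m :=
  ⟨hm, fun _ h => by rw [h], fun _ _ h => h m rfl⟩

theorem isLcmOf_pair (s r : V →₀ ℕ) :
    IsLcmOf {monomial s (1 : k), monomial r 1} (monomial (s ⊔ r) 1) := by
  refine ⟨⟨_, rfl⟩, ?_, ?_⟩
  · rintro m (rfl | rfl) <;> rw [monomial_one_dvd_monomial_one]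
    exacts [le_sup_left, le_sup_right]
  · rintro _ ⟨t, rfl⟩ h
    simp only [Set.mem_insert_iff, Set.mem_singleton_iff, forall_eq_or_imp, forall_eq,
      monomial_one_dvd_monomial_one] at h
    exact monomial_one_dvd_monomial_one.mpr (sup_le h.1 h.2)

theorem IsLcmOf.apply_eq_zero {S : Set (MvPolynomial V k)} {t : V →₀ ℕ} {z : V}
    (hL : IsLcmOf S (monomial t 1)) (hS : ∀ m ∈ S, ∃ s : V →₀ ℕ, m = monomial s 1 ∧ s z = 0) :
    t z = 0 := by
  have hdvd : ∀ m ∈ S, m ∣ monomial (t.erase z) 1 := by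
    intro m hm
    obtain ⟨s, rfl, hsz⟩ := hS m hm
    have hst := monomial_one_dvd_monomial_one.mp (hL.2.1 _ hm)
    refine monomial_one_dvd_monomial_one.mpr fun y => ?_
    by_cases hy : y = z
    · simp [hy, hsz]
    · simpa [Finsupp.erase_ne hy] using hst y
  simpa using monomial_one_dvd_monomial_one.mp (hL.2.2 _ ⟨_, rfl⟩ hdvd) z

theorem monomial_mem_span_monomial_image {A : Set (V →₀ ℕ)} {t : V →₀ ℕ} :
    monomial t (1 : k) ∈ Ideal.span ((fun s => monomial s 1) '' A) ↔ ∃ a ∈ A, a ≤ t := by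
  classical
  simp [mem_ideal_span_monomial_image, support_monomial]

theorem minGens_eq_image_minimal {I : Ideal (MvPolynomial V k)} {P : (V →₀ ℕ) → Prop}
    (hP : ∀ t, monomial t (1 : k) ∈ I ↔ P t) :
    minGens I = (fun s => monomial s 1) '' {t | Minimal P t} := by
  ext m
  constructor
  · rintro ⟨⟨t, rfl⟩, hmem, hmin⟩
    refine ⟨t, ⟨(hP t).mp hmem, fun s hs hst => ?_⟩, rfl⟩
    by_contra hts
    exact hmin _ ⟨s, rfl⟩ (monomial_one_dvd_monomial_one.mpr hst)
      (fun h => hts (monomial_one_injective h).ge) ((hP s).mpr hs)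
  · rintro ⟨t, ht, rfl⟩
    refine ⟨⟨t, rfl⟩, (hP t).mpr ht.prop, ?_⟩
    rintro _ ⟨s, rfl⟩ hdvd hne hs
    have hst := monomial_one_dvd_monomial_one.mp hdvd
    exact hne (by rw [le_antisymm hst (ht.le_of_le ((hP s).mp hs) hst)])

theorem minGens_span_monomial_image {A : Set (V →₀ ℕ)} (hA : IsAntichain (· ≤ ·) A) :
    minGens (Ideal.span ((fun s => monomial s (1 : k)) '' A)) = (fun s => monomial s 1) '' A := by
  rw [minGens_eq_image_minimal fun t => monomial_mem_span_monomial_image]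
  simp only [minimal_exists_le_iff hA, Set.ofPred_mem_eq]

end Monomial

section EdgeIdeal

variable {k : Type*} [Field k]

noncomputable def edgeExponent (x y : V) : V →₀ ℕ :=
  Finsupp.single x 1 + Finsupp.single y 1

theorem edgeExponent_comm (x y : V) : edgeExponent x y = edgeExponent y x :=
  add_comm _ _

theorem degree_edgeExponent (x y : V) : (edgeExponent x y).degree = 2 := by
  simp [edgeExponent]

theorem edgeExponent_apply_ne_zero {x y z : V} : edgeExponent x y z ≠ 0 ↔ z = x ∨ z = y := by
  classical
  simp only [edgeExponent, Finsupp.add_apply, Finsupp.single_apply]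
  split_ifs <;> simp_all [eq_comm]

theorem edgeExponent_le_iff {x y : V} (hxy : x ≠ y) {t : V →₀ ℕ} :
    edgeExponent x y ≤ t ↔ t x ≠ 0 ∧ t y ≠ 0 := by
  classical
  constructor
  · intro h
    exact ⟨fun hx => by simpa [edgeExponent, hx, hxy] using h x,
      fun hy => by simpa [edgeExponent, hy, hxy.symm] using h y⟩
  · rintro ⟨hx, hy⟩ z
    simp only [edgeExponent, Finsupp.add_apply, Finsupp.single_apply]
    split_ifs <;> subst_vars <;> simp_all [Nat.one_le_iff_ne_zero]

theorem edgeExponent_eq_edgeExponent_iff {x y a b : V} :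
    edgeExponent x y = edgeExponent a b ↔ s(x, y) = s(a, b) := by
  simp [edgeExponent, Finsupp.single_add_single_eq_single_add_single]

theorem X_mul_X_eq_monomial (x y : V) :
    (X x * X y : MvPolynomial V k) = monomial (edgeExponent x y) 1 := by
  rw [X, X, monomial_mul, mul_one, edgeExponent]

theorem X_mul_X_eq_X_mul_X_iff {x y a b : V} :
    (X x * X y : MvPolynomial V k) = X a * X b ↔ s(x, y) = s(a, b) := by
  rw [X_mul_X_eq_monomial, X_mul_X_eq_monomial, monomial_one_injective.eq_iff,
    edgeExponent_eq_edgeExponent_iff]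

def edgeMonomials (k : Type*) [Field k] (G : SimpleGraph V) : Set (MvPolynomial V k) :=
  {m | ∃ x y, G.Adj x y ∧ m = X x * X y}

def edgeExponents (G : SimpleGraph V) : Set (V →₀ ℕ) :=
  {t | ∃ x y, G.Adj x y ∧ edgeExponent x y = t}

theorem edgeMonomials_eq_image (G : SimpleGraph V) :
    edgeMonomials k G = (fun s => monomial s 1) '' edgeExponents G := by
  ext m
  simp only [edgeMonomials, edgeExponents, Set.mem_ofPred_eq, Set.mem_image]
  constructor
  · rintro ⟨x, y, h, rfl⟩
    exact ⟨_, ⟨x, y, h, rfl⟩, (X_mul_X_eq_monomial x y).symm⟩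
  · rintro ⟨_, ⟨x, y, h, rfl⟩, rfl⟩
    exact ⟨x, y, h, (X_mul_X_eq_monomial x y).symm⟩

theorem edgeIdeal_eq_span_image (G : SimpleGraph V) :
    edgeIdeal k G = Ideal.span ((fun s => monomial s 1) '' edgeExponents G) := by
  rw [← edgeMonomials_eq_image]
  rfl

theorem monomial_mem_edgeIdeal {G : SimpleGraph V} {t : V →₀ ℕ} :
    monomial t (1 : k) ∈ edgeIdeal k G ↔ ∃ x y, G.Adj x y ∧ edgeExponent x y ≤ t := by
  simp [edgeIdeal_eq_span_image, monomial_mem_span_monomial_image, edgeExponents]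

theorem minGens_edgeIdeal (G : SimpleGraph V) :
    minGens (edgeIdeal k G) = edgeMonomials k G := by
  rw [edgeIdeal_eq_span_image, edgeMonomials_eq_image, minGens_span_monomial_image]
  refine (Finsupp.isAntichain_setOf_degree_eq 2).subset ?_
  rintro _ ⟨x, y, -, rfl⟩
  exact degree_edgeExponent x y

theorem isMonomialIdeal_edgeIdeal (G : SimpleGraph V) : IsMonomialIdeal (edgeIdeal k G) :=
  ⟨edgeMonomials k G, by rintro _ ⟨x, y, -, rfl⟩; exact ⟨_, X_mul_X_eq_monomial x y⟩, rfl⟩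

theorem edgeIdeal_ne_bot {G : SimpleGraph V} (hG : G.edgeSet.Nonempty) : edgeIdeal k G ≠ ⊥ := by
  obtain ⟨e, he⟩ := hG
  induction e using Sym2.ind with | _ x y => ?_
  have h : G.Adj x y := he
  intro hbot
  have hxy : (X x * X y : MvPolynomial V k) ∈ edgeIdeal k G := Ideal.subset_span ⟨x, y, h, rfl⟩
  simp [hbot, X_mul_X_eq_monomial] at hxy

end EdgeIdeal

section SplittingEdge

variable {k : Type*} [Field k] {G : SimpleGraph V} {u v : V}

theorem edgeMonomials_eq_insert (huv : G.Adj u v) :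
    edgeMonomials k G = insert (X u * X v) (edgeMonomials k (G.deleteEdges {s(u, v)})) := by
  ext m
  constructor
  · rintro ⟨x, y, hxy, rfl⟩
    by_cases he : s(x, y) = s(u, v)
    · exact Or.inl (X_mul_X_eq_X_mul_X_iff.mpr he)
    · exact Or.inr ⟨x, y, SimpleGraph.deleteEdges_adj.mpr ⟨hxy, he⟩, rfl⟩
  · rintro (rfl | ⟨x, y, hxy, rfl⟩)
    · exact ⟨u, v, huv, rfl⟩
    · exact ⟨x, y, (SimpleGraph.deleteEdges_adj.mp hxy).1, rfl⟩

theorem X_mul_X_notMem_edgeMonomials_deleteEdges :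
    X u * X v ∉ edgeMonomials k (G.deleteEdges {s(u, v)}) := by
  rintro ⟨x, y, hxy, he⟩
  exact (SimpleGraph.deleteEdges_adj.mp hxy).2 (X_mul_X_eq_X_mul_X_iff.mp he.symm)

theorem edgeIdeal_eq_span_add_edgeIdeal_deleteEdges (huv : G.Adj u v) :
    edgeIdeal k G = Ideal.span {X u * X v} + edgeIdeal k (G.deleteEdges {s(u, v)}) := by
  change Ideal.span (edgeMonomials k G) = _
  rw [edgeMonomials_eq_insert huv, Ideal.span_insert]
  rfl

theorem minGens_span_X_mul_X :
    minGens (Ideal.span {(X u * X v : MvPolynomial V k)}) = {X u * X v} := by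
  rw [X_mul_X_eq_monomial, ← Set.image_singleton (f := fun s => monomial s (1 : k)),
    minGens_span_monomial_image IsAntichain.singleton]

theorem monomial_mem_span_X_mul_X_inf_edgeIdeal {H : SimpleGraph V} {t : V →₀ ℕ} :
    monomial t (1 : k) ∈ Ideal.span {X u * X v} ⊓ edgeIdeal k H ↔
      ∃ s ∈ (edgeExponent u v ⊔ ·) '' edgeExponents H, s ≤ t := by
  simp only [Submodule.mem_inf, Ideal.mem_span_singleton, X_mul_X_eq_monomial,
    monomial_one_dvd_monomial_one, monomial_mem_edgeIdeal, edgeExponents, Set.exists_mem_image,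
    sup_le_iff]
  aesop

theorem exists_eq_of_mem_minGens_inf {H : SimpleGraph V} {w : MvPolynomial V k}
    (hw : w ∈ minGens (Ideal.span {X u * X v} ⊓ edgeIdeal k H)) :
    ∃ x y, H.Adj x y ∧ w = monomial (edgeExponent u v ⊔ edgeExponent x y) 1 := by
  rw [minGens_eq_image_minimal fun t => monomial_mem_span_X_mul_X_inf_edgeIdeal] at hw
  obtain ⟨t, ht, rfl⟩ := hw
  obtain ⟨_, ⟨x, y, hxy, rfl⟩, rfl⟩ := minimal_exists_le_imp_mem ht
  exact ⟨x, y, hxy, rfl⟩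

theorem eq_of_edgeExponent_le_sup {x y a : V} (hxy : G.Adj x y) (hne : s(x, y) ≠ s(u, v))
    (hva : ¬G.Adj v a) (hle : edgeExponent x y ≤ edgeExponent u v ⊔ edgeExponent u a) :
    s(x, y) = s(u, a) := by
  have hmem : ∀ z, edgeExponent x y z ≠ 0 → z = u ∨ z = v ∨ z = a := by
    intro z hz
    have hz' : (edgeExponent u v ⊔ edgeExponent u a) z ≠ 0 :=
      fun h => hz (Nat.eq_zero_of_le_zero (h ▸ hle z))
    rw [Finsupp.sup_apply, ne_eq, Nat.max_eq_zero_iff, not_and_or, ← ne_eq, ← ne_eq,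
      edgeExponent_apply_ne_zero, edgeExponent_apply_ne_zero] at hz'
    tauto
  have hx := hmem x (edgeExponent_apply_ne_zero.mpr (Or.inl rfl))
  have hy := hmem y (edgeExponent_apply_ne_zero.mpr (Or.inr rfl))
  rcases hx with rfl | rfl | rfl <;> rcases hy with rfl | rfl | rfl <;>
    simp_all [Sym2.eq_swap, SimpleGraph.adj_comm]

theorem monomial_mem_minGens_inf_deleteEdges {a : V} (hua : G.Adj u a) (hva : ¬G.Adj v a)
    (hav : a ≠ v) :
    monomial (edgeExponent u v ⊔ edgeExponent u a) 1 ∈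
      minGens (Ideal.span {X u * X v} ⊓ edgeIdeal k (G.deleteEdges {s(u, v)})) := by
  rw [minGens_eq_image_minimal fun t => monomial_mem_span_X_mul_X_inf_edgeIdeal,
    monomial_one_injective.mem_set_image]
  have hua' : (G.deleteEdges {s(u, v)}).Adj u a := by simp [hua, hav, hua.ne']
  refine ⟨⟨_, ⟨_, ⟨u, a, hua', rfl⟩, rfl⟩, le_rfl⟩, ?_⟩
  rintro s ⟨_, ⟨_, ⟨x, y, hxy, rfl⟩, rfl⟩, hs⟩ hsle
  obtain ⟨hxy, hne⟩ := SimpleGraph.deleteEdges_adj.mp hxy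
  have hxy_eq := eq_of_edgeExponent_le_sup hxy hne hva (le_sup_right.trans (hs.trans hsle))
  rwa [← edgeExponent_eq_edgeExponent_iff.mpr hxy_eq]

theorem eq_X_mul_X_of_dvd {a : V} {m : MvPolynomial V k} (hva : ¬G.Adj v a)
    (hm : m ∈ minGens (edgeIdeal k (G.deleteEdges {s(u, v)})))
    (hdvd : m ∣ monomial (edgeExponent u v ⊔ edgeExponent u a) 1) :
    m = X u * X a := by
  rw [minGens_edgeIdeal] at hm
  obtain ⟨x, y, hxy, rfl⟩ := hm
  obtain ⟨hxy, hne⟩ := SimpleGraph.deleteEdges_adj.mp hxy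
  rw [X_mul_X_eq_monomial, monomial_one_dvd_monomial_one] at hdvd
  exact X_mul_X_eq_X_mul_X_iff.mpr (eq_of_edgeExponent_le_sup hxy hne hva hdvd)

theorem neighborSet_subset_of_isSplitting (huv : G.Adj u v)
    (h : IsSplitting (edgeIdeal k G) (Ideal.span {X u * X v})
      (edgeIdeal k (G.deleteEdges {s(u, v)}))) :
    G.neighborSet u ⊆ insert v (G.neighborSet v) ∨
      G.neighborSet v ⊆ insert u (G.neighborSet u) := by
  obtain ⟨-, -, -, -, -, -, -, φ, ψ, hpair, hstrict⟩ := h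
  by_contra! hc
  obtain ⟨⟨a, hua, hav, hva⟩, ⟨b, hvb, hbu, hub⟩⟩ :
      (∃ a, G.Adj u a ∧ a ≠ v ∧ ¬G.Adj v a) ∧ (∃ b, G.Adj v b ∧ b ≠ u ∧ ¬G.Adj u b) := by
    simpa [Set.not_subset] using hc
  have hw₁ := monomial_mem_minGens_inf_deleteEdges (k := k) hua hva hav
  have hw₂ := monomial_mem_minGens_inf_deleteEdges (k := k) hvb hub hbu
  have hψ₁ := eq_X_mul_X_of_dvd hva (hpair _ hw₁).2.1 ((hpair _ hw₁).2.2.2.1 _ (by simp))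
  rw [mul_comm (X v), Sym2.eq_swap, edgeExponent_comm v u] at hw₂
  have hψ₂ := eq_X_mul_X_of_dvd (u := v) hub (by rw [Sym2.eq_swap]; exact (hpair _ hw₂).2.1)
    (by rw [edgeExponent_comm v u]; exact (hpair _ hw₂).2.2.2.1 _ (by simp))
  obtain ⟨s₁, hs₁⟩ := (hpair _ hw₁).1.1
  obtain ⟨s₂, hs₂⟩ := (hpair _ hw₂).1.1
  have hL := isLcmOf_pair (k := k) (edgeExponent u v ⊔ edgeExponent u a)
    (edgeExponent u v ⊔ edgeExponent v b)
  have hLφ := isLcmOf_pair (k := k) s₁ s₂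
  have hLψ := isLcmOf_pair (k := k) (edgeExponent u a) (edgeExponent v b)
  rw [← hs₁, ← hs₂, ← Set.image_pair] at hLφ
  rw [← X_mul_X_eq_monomial, ← X_mul_X_eq_monomial, ← hψ₁, ← hψ₂, ← Set.image_pair] at hLψ
  refine (hstrict _ (Set.pair_subset hw₁ hw₂) (Set.insert_nonempty _ _) _ _ _ hL hLφ hLψ).2.2 ?_
  have huv_le : edgeExponent u v ≤ edgeExponent u a ⊔ edgeExponent v b := by
    rw [edgeExponent_le_iff huv.ne, Finsupp.sup_apply, Finsupp.sup_apply]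
    exact ⟨fun h => edgeExponent_apply_ne_zero.mpr (Or.inl rfl) (Nat.max_eq_zero_iff.mp h).1,
      fun h => edgeExponent_apply_ne_zero.mpr (Or.inl rfl) (Nat.max_eq_zero_iff.mp h).2⟩
  rw [sup_sup_sup_comm, sup_idem, sup_eq_right.mpr huv_le]

theorem sup_edgeExponent_eq_sup_edgeExponent {y : V} (hyu : y ≠ u) (hyv : y ≠ v) :
    edgeExponent u v ⊔ edgeExponent u y = edgeExponent u v ⊔ edgeExponent v y := by
  classical
  ext z
  simp only [Finsupp.sup_apply, edgeExponent, Finsupp.add_apply, Finsupp.single_apply]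
  split_ifs <;> subst_vars <;> simp_all

theorem exists_edge_avoiding_of_adj (huv : G.Adj u v)
    (hN : G.neighborSet u ⊆ insert v (G.neighborSet v)) {y : V}
    (hy : (G.deleteEdges {s(u, v)}).Adj u y) :
    ∃ x' y', (G.deleteEdges {s(u, v)}).Adj x' y' ∧ x' ≠ u ∧ y' ≠ u ∧
      edgeExponent u v ⊔ edgeExponent u y = edgeExponent u v ⊔ edgeExponent x' y' := by
  obtain ⟨huy, hne⟩ := SimpleGraph.deleteEdges_adj.mp hy
  have hyv : y ≠ v := by rintro rfl; exact hne rfl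
  have hvy : G.Adj v y := (hN huy).resolve_left hyv
  refine ⟨v, y, ?_, huv.ne', huy.ne', sup_edgeExponent_eq_sup_edgeExponent huy.ne' hyv⟩
  simp [hvy, huv.ne', huy.ne']

theorem exists_edge_avoiding_of_mem_minGens_inf (huv : G.Adj u v)
    (hN : G.neighborSet u ⊆ insert v (G.neighborSet v)) {w : MvPolynomial V k}
    (hw : w ∈ minGens (Ideal.span {X u * X v} ⊓ edgeIdeal k (G.deleteEdges {s(u, v)}))) :
    ∃ x y, (G.deleteEdges {s(u, v)}).Adj x y ∧ x ≠ u ∧ y ≠ u ∧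
      w = monomial (edgeExponent u v ⊔ edgeExponent x y) 1 := by
  obtain ⟨x, y, hxy, rfl⟩ := exists_eq_of_mem_minGens_inf hw
  by_cases hx : x = u
  · subst hx
    obtain ⟨x', y', h⟩ := exists_edge_avoiding_of_adj huv hN hxy
    exact ⟨x', y', by rw [h.2.2.2]; exact ⟨h.1, h.2.1, h.2.2.1, rfl⟩⟩
  by_cases hy : y = u
  · subst hy
    obtain ⟨x', y', h⟩ := exists_edge_avoiding_of_adj huv hN hxy.symm
    exact ⟨x', y', by rw [edgeExponent_comm x, h.2.2.2]; exact ⟨h.1, h.2.1, h.2.2.1, rfl⟩⟩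
  exact ⟨x, y, hxy, hx, hy, rfl⟩

theorem X_mul_X_dvd_and_ne_of_isLcmOf {S : Set (MvPolynomial V k)} {L : MvPolynomial V k}
    (hS : S ⊆ minGens (Ideal.span {X u * X v} ⊓ edgeIdeal k (G.deleteEdges {s(u, v)})))
    (hne : S.Nonempty) (hL : IsLcmOf S L) : X u * X v ∣ L ∧ X u * X v ≠ L := by
  obtain ⟨w₀, hw₀⟩ := hne
  obtain ⟨x, y, hxy, hw₀_eq⟩ := exists_eq_of_mem_minGens_inf (hS hw₀)
  obtain ⟨tL, rfl⟩ := hL.1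
  have hle : edgeExponent u v ⊔ edgeExponent x y ≤ tL := by
    have hdvd := hL.2.1 w₀ hw₀
    rwa [hw₀_eq, monomial_one_dvd_monomial_one] at hdvd
  rw [X_mul_X_eq_monomial, monomial_one_dvd_monomial_one, Ne, monomial_one_injective.eq_iff]
  refine ⟨le_sup_left.trans hle, ?_⟩
  rintro rfl
  have hedge := (Finsupp.isAntichain_setOf_degree_eq 2).eq (degree_edgeExponent x y)
    (degree_edgeExponent u v) (le_sup_right.trans hle)
  exact (SimpleGraph.deleteEdges_adj.mp hxy).2 (edgeExponent_eq_edgeExponent_iff.mp hedge)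

theorem exists_splitting_function (huv : G.Adj u v)
    (hN : G.neighborSet u ⊆ insert v (G.neighborSet v)) :
    ∃ φ ψ : MvPolynomial V k → MvPolynomial V k,
      (∀ w ∈ minGens (Ideal.span {X u * X v} ⊓ edgeIdeal k (G.deleteEdges {s(u, v)})),
        φ w ∈ minGens (Ideal.span {X u * X v}) ∧
          ψ w ∈ minGens (edgeIdeal k (G.deleteEdges {s(u, v)})) ∧ IsLcmOf {φ w, ψ w} w) ∧
      (∀ S ⊆ minGens (Ideal.span {X u * X v} ⊓ edgeIdeal k (G.deleteEdges {s(u, v)})),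
        S.Nonempty → ∀ L Lφ Lψ : MvPolynomial V k, IsLcmOf S L → IsLcmOf (φ '' S) Lφ →
          IsLcmOf (ψ '' S) Lψ → (Lφ ∣ L ∧ Lφ ≠ L) ∧ (Lψ ∣ L ∧ Lψ ≠ L)) := by
  have : Nonempty V := ⟨u⟩
  choose! x y hxy hxu hyu hw using fun (w : MvPolynomial V k)
    (hw : w ∈ minGens (Ideal.span {X u * X v} ⊓ edgeIdeal k (G.deleteEdges {s(u, v)}))) =>
    exists_edge_avoiding_of_mem_minGens_inf huv hN hw
  refine ⟨fun _ => X u * X v, fun w => X (x w) * X (y w), fun w hw' => ⟨?_, ?_, ?_⟩, ?_⟩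
  · rw [minGens_span_X_mul_X]
    rfl
  · rw [minGens_edgeIdeal]
    exact ⟨_, _, hxy w hw', rfl⟩
  · have hlcm := isLcmOf_pair (k := k) (edgeExponent u v) (edgeExponent (x w) (y w))
    rwa [← X_mul_X_eq_monomial, ← X_mul_X_eq_monomial, ← hw w hw'] at hlcm
  rintro S hS hne L Lφ Lψ hL hLφ hLψ
  have huvL := X_mul_X_dvd_and_ne_of_isLcmOf hS hne hL
  have hLφ_eq : Lφ = X u * X v := by
    rw [hne.image_const] at hLφ
    exact hLφ.unique (isLcmOf_singleton ⟨_, X_mul_X_eq_monomial u v⟩)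
  obtain ⟨tL, rfl⟩ := hL.1
  have hLψ_dvd : Lψ ∣ monomial tL 1 := by
    refine hLψ.2.2 _ ⟨_, rfl⟩ ?_
    rintro _ ⟨w, hwS, rfl⟩
    refine dvd_trans ?_ (hL.2.1 w hwS)
    conv_rhs => rw [hw w (hS hwS)]
    dsimp only
    rw [X_mul_X_eq_monomial, monomial_one_dvd_monomial_one]
    exact le_sup_right
  refine ⟨hLφ_eq ▸ huvL, hLψ_dvd, fun hLψ_eq => ?_⟩
  rw [hLψ_eq] at hLψ
  rw [X_mul_X_eq_monomial, monomial_one_dvd_monomial_one] at huvL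
  refine (edgeExponent_le_iff huv.ne).mp huvL.1 |>.1 (hLψ.apply_eq_zero ?_)
  rintro _ ⟨w, hwS, rfl⟩
  refine ⟨_, X_mul_X_eq_monomial _ _, ?_⟩
  by_contra h
  rcases edgeExponent_apply_ne_zero.mp h with h | h
  exacts [hxu w (hS hwS) h.symm, hyu w (hS hwS) h.symm]

theorem isSplitting_of_neighborSet_subset (huv : G.Adj u v)
    (hK : (G.deleteEdges {s(u, v)}).edgeSet.Nonempty)
    (hN : G.neighborSet u ⊆ insert v (G.neighborSet v)) :
    IsSplitting (edgeIdeal k G) (Ideal.span {X u * X v})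
      (edgeIdeal k (G.deleteEdges {s(u, v)})) := by
  have hJ : Ideal.span {(X u * X v : MvPolynomial V k)} ≠ ⊥ := by
    simp [X_mul_X_eq_monomial]
  refine ⟨⟨{X u * X v}, by rintro _ rfl; exact ⟨_, X_mul_X_eq_monomial u v⟩, rfl⟩,
    isMonomialIdeal_edgeIdeal _, hJ, edgeIdeal_ne_bot hK,
    edgeIdeal_eq_span_add_edgeIdeal_deleteEdges huv, ?_, ?_,
    exists_splitting_function huv hN⟩
  · rw [minGens_edgeIdeal, minGens_edgeIdeal, minGens_span_X_mul_X, edgeMonomials_eq_insert huv,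
      Set.insert_eq]
  · rw [minGens_edgeIdeal, minGens_span_X_mul_X, Set.disjoint_singleton_left]
    exact X_mul_X_notMem_edgeMonomials_deleteEdges

end SplittingEdge

theorem SimpleGraph.edgeSet_deleteEdges_singleton_nonempty {G : SimpleGraph V} (e : Sym2 V)
    (htwo : ∃ e f : Sym2 V, e ∈ G.edgeSet ∧ f ∈ G.edgeSet ∧ e ≠ f) :
    (G.deleteEdges {e}).edgeSet.Nonempty := by
  obtain ⟨e₁, e₂, h₁, h₂, hne⟩ := htwo
  rw [SimpleGraph.edgeSet_deleteEdges, Set.sdiff_nonempty]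
  intro hsub
  exact hne ((hsub h₁).trans (hsub h₂).symm)

theorem stmt2_general (k : Type*) [Field k]
    (G : SimpleGraph V) (u v : V) (huv : G.Adj u v)
    (htwo : ∃ e f : Sym2 V, e ∈ G.edgeSet ∧ f ∈ G.edgeSet ∧ e ≠ f) :
    IsSplitting (edgeIdeal k G)
        (Ideal.span {(X u * X v : MvPolynomial V k)})
        (edgeIdeal k (G.deleteEdges {s(u, v)})) ↔
      (G.neighborSet u ⊆ insert v (G.neighborSet v) ∨
        G.neighborSet v ⊆ insert u (G.neighborSet u)) := by
  refine ⟨neighborSet_subset_of_isSplitting huv, ?_⟩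
  have hK := G.edgeSet_deleteEdges_singleton_nonempty s(u, v) htwo
  rintro (hN | hN)
  · exact isSplitting_of_neighborSet_subset huv hK hN
  · rw [Sym2.eq_swap] at hK
    have hsplit := isSplitting_of_neighborSet_subset (k := k) huv.symm hK hN
    rwa [mul_comm (X v), Sym2.eq_swap] at hsplit

/-- if `G` has at least two edges, then an edge `e = uv` of `G` is a
splitting edge of `G` if and only if `N(u) ⊆ N(v) ∪ {v}` or `N(v) ⊆ N(u) ∪ {u}`. -/
theorem stmt2 (k : Type*) [Field k] [Fintype V] [DecidableEq V]
    (G : SimpleGraph V) (u v : V) (huv : G.Adj u v)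
    (htwo : ∃ e f : Sym2 V, e ∈ G.edgeSet ∧ f ∈ G.edgeSet ∧ e ≠ f) :
    IsSplitting (edgeIdeal k G)
        (Ideal.span {(X u * X v : MvPolynomial V k)})
        (edgeIdeal k (G.deleteEdges {s(u, v)})) ↔
      (G.neighborSet u ⊆ insert v (G.neighborSet v) ∨
        G.neighborSet v ⊆ insert u (G.neighborSet u)) :=
  stmt2_general k G u v huv htwo
end

section
/- Let v be a splitting vertex of G with N(v) = {v_1,…,v_d}. If the complement graph G^c contains no minimal cycle of length 4 (i.e., no induced 4-cycle), then (vv_1,…,vv_d) ∩ I(G∖{v}) = v·I(G_(v)), where m·I denotes the product of the principal ideal generated by the monomial m with the ideal I. -/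
open MvPolynomial

variable {V : Type*}

/-- The graph `G_(v)`: its edges are the edges of the induced subgraph of `G`
on `N(v)` together with all edges of `G` incident to some neighbor of `v` but
not incident to `v`. -/
def splitSub (G : SimpleGraph V) (v : V) : SimpleGraph V where
  Adj x y := G.Adj x y ∧ x ≠ v ∧ y ≠ v ∧ (G.Adj v x ∨ G.Adj v y)
  symm := ⟨fun _ _ h => ⟨h.1.symm, h.2.2.1, h.2.1, h.2.2.2.symm⟩⟩
  loopless := ⟨fun _ h => G.irrefl h.1⟩

/-!
All three ideals are generated by squarefree monomials, so a polynomial lies in one of them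
iff every monomial of its support is divisible by a generator; this reduces the identity to a
statement about the support `T` of a single monomial. If `T` contains `v`, a neighbor `w` of `v`
and an edge `xy` of `G ∖ {v}`, but no edge of `G_(v)`, then in `G` the vertex `v` is adjacent to
neither `x` nor `y` and `w` is adjacent to neither `x` nor `y`; so `v x w y` is an induced
4-cycle of `Gᶜ`.
-/

def HasInducedSquare (H : SimpleGraph V) : Prop :=
  ∃ a b c d : V, a ≠ c ∧ b ≠ d ∧ H.Adj a b ∧ H.Adj b c ∧ H.Adj c d ∧ H.Adj d a ∧
    ¬ H.Adj a c ∧ ¬ H.Adj b d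

section Combinatorics

variable {G : SimpleGraph V} {v : V}

lemma splitSub_le_delVerts : splitSub G v ≤ delVerts G {v} :=
  fun _ _ h => ⟨h.1, h.2.1, h.2.2.1⟩

lemma exists_splitSub_adj_of_not_hasInducedSquare_compl (hG : ¬ HasInducedSquare Gᶜ)
    {T : Finset V} {w x y : V} (hw : G.Adj v w) (hxy : (delVerts G {v}).Adj x y)
    (hwT : w ∈ T) (hxT : x ∈ T) (hyT : y ∈ T) :
    ∃ a ∈ T, ∃ b ∈ T, (splitSub G v).Adj a b := by
  obtain ⟨hGxy, hxv, hyv⟩ := hxy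
  by_contra! hnone
  have hvx : ¬ G.Adj v x := fun h => hnone x hxT y hyT ⟨hGxy, hxv, hyv, Or.inl h⟩
  have hvy : ¬ G.Adj v y := fun h => hnone x hxT y hyT ⟨hGxy, hxv, hyv, Or.inr h⟩
  have hwx : ¬ G.Adj w x := fun h => hnone w hwT x hxT ⟨h, hw.ne', hxv, Or.inl hw⟩
  have hwy : ¬ G.Adj w y := fun h => hnone w hwT y hyT ⟨h, hw.ne', hyv, Or.inl hw⟩
  refine hG ⟨v, x, w, y, hw.ne, hGxy.ne, ?_, ?_, ?_, ?_, ?_, ?_⟩ <;>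
    simp only [SimpleGraph.compl_adj, not_and, not_not]
  · exact ⟨Ne.symm hxv, hvx⟩
  · exact ⟨fun h => hvx (h ▸ hw), fun h => hwx h.symm⟩
  · exact ⟨fun h => hvy (h ▸ hw), hwy⟩
  · exact ⟨hyv, fun h => hvy h.symm⟩
  · exact fun _ => hw
  · exact fun _ => hGxy

end Combinatorics

section MonomialIdeals

variable {k : Type*} [Field k] [DecidableEq V]

lemma Finsupp.sum_single_one_le_iff {s : Finset V} {m : V →₀ ℕ} :
    ∑ a ∈ s, Finsupp.single a 1 ≤ m ↔ s ⊆ m.support := by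
  simp only [Finsupp.le_def, Finsupp.finsetSum_apply, Finsupp.single_apply, Finset.sum_ite_eq',
    Finset.subset_iff, Finsupp.mem_support_iff]
  refine forall_congr' fun a => ?_
  split_ifs <;> simp [Nat.one_le_iff_ne_zero, *]

lemma mem_span_image_prod_X_iff {ι : Type*} {t : ι → Finset V} {S : Set ι}
    {f : MvPolynomial V k} :
    f ∈ Ideal.span ((fun i => ∏ a ∈ t i, X a) '' S) ↔
      ∀ m ∈ f.support, ∃ i ∈ S, t i ⊆ m.support := by
  have hprod : (fun i => ∏ a ∈ t i, (X a : MvPolynomial V k)) =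
      (fun s => monomial s 1) ∘ fun i => ∑ a ∈ t i, Finsupp.single a 1 := by
    ext1 i
    exact (monomial_sum_one _ _).symm
  simp only [hprod, Set.image_comp, mem_ideal_span_monomial_image, Set.exists_mem_image,
    Finsupp.sum_single_one_le_iff]

lemma edgeIdeal_eq_span_image_prod_X (G : SimpleGraph V) :
    edgeIdeal k G =
      Ideal.span ((fun e : V × V => ∏ a ∈ {e.1, e.2}, X a) '' {e | G.Adj e.1 e.2}) := by
  unfold edgeIdeal
  congr 1
  ext p
  simp only [Set.mem_ofPred_eq, Set.mem_image, Prod.exists]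
  constructor
  · rintro ⟨x, y, h, rfl⟩
    exact ⟨x, y, h, Finset.prod_pair h.ne⟩
  · rintro ⟨x, y, h, rfl⟩
    exact ⟨x, y, h, Finset.prod_pair h.ne⟩

lemma span_X_mul_edgeIdeal {H : SimpleGraph V} {v : V} (hv : ∀ x y, H.Adj x y → x ≠ v) :
    Ideal.span {X v} * edgeIdeal k H =
      Ideal.span ((fun e : V × V => ∏ a ∈ {v, e.1, e.2}, X a) '' {e | H.Adj e.1 e.2}) := by
  rw [edgeIdeal_eq_span_image_prod_X, Ideal.span_mul_span', Set.singleton_mul, Set.image_image]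
  refine congrArg _ (Set.image_congr fun e he => ?_)
  have hv' : v ∉ ({e.1, e.2} : Finset V) := by
    simp only [Finset.mem_insert, Finset.mem_singleton, not_or]
    exact ⟨(hv _ _ he).symm, (hv _ _ he.symm).symm⟩
  exact (Finset.prod_insert hv').symm

end MonomialIdeals

theorem stmt6_general (k : Type*) [Field k] [DecidableEq V]
    (G : SimpleGraph V) (v : V)
    (hC4 : ¬ ∃ a b c d : V, a ≠ c ∧ b ≠ d ∧
        Gᶜ.Adj a b ∧ Gᶜ.Adj b c ∧ Gᶜ.Adj c d ∧ Gᶜ.Adj d a ∧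
        ¬ Gᶜ.Adj a c ∧ ¬ Gᶜ.Adj b d) :
    Ideal.span ((fun w => (X v * X w : MvPolynomial V k)) '' G.neighborSet v) ⊓
        edgeIdeal k (delVerts G {v}) =
      Ideal.span {(X v : MvPolynomial V k)} * edgeIdeal k (splitSub G v) := by
  have hJ : (fun w => (X v * X w : MvPolynomial V k)) '' G.neighborSet v =
      (fun w => ∏ a ∈ {v, w}, X a) '' G.neighborSet v :=
    Set.image_congr fun w hw => (Finset.prod_pair (G.ne_of_adj hw)).symm
  ext f
  rw [Submodule.mem_inf, hJ, edgeIdeal_eq_span_image_prod_X,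
    span_X_mul_edgeIdeal fun _ _ h => (h : (splitSub G v).Adj _ _).2.1, mem_span_image_prod_X_iff,
    mem_span_image_prod_X_iff, mem_span_image_prod_X_iff, ← forall₂_and]
  refine forall₂_congr fun m _ => ?_
  simp only [Finset.insert_subset_iff, Finset.singleton_subset_iff, Set.mem_ofPred_eq,
    SimpleGraph.mem_neighborSet, Prod.exists]
  constructor
  · rintro ⟨⟨w, hw, hv, hwT⟩, x, y, hxy, hxT, hyT⟩
    obtain ⟨a, ha, b, hb, hab⟩ :=
      exists_splitSub_adj_of_not_hasInducedSquare_compl hC4 hw hxy hwT hxT hyT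
    exact ⟨a, b, hab, hv, ha, hb⟩
  · rintro ⟨x, y, hxy, hv, hxT, hyT⟩
    refine ⟨?_, x, y, splitSub_le_delVerts hxy, hxT, hyT⟩
    rcases hxy.2.2.2 with hvx | hvy
    exacts [⟨x, hvx, hv, hxT⟩, ⟨y, hvy, hv, hyT⟩]

/-- if `v` is a splitting vertex of `G` with `N(v) = {v₁,…,v_d}`
and the complement `Gᶜ` has no minimal (induced, chordless) cycle of length 4,
then `(v v₁, …, v v_d) ∩ I(G \ {v}) = v·I(G_(v))`. -/
theorem stmt6 (k : Type*) [Field k] [Fintype V] [DecidableEq V]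
    (G : SimpleGraph V) (v : V)
    (hdeg : (G.neighborSet v).Nonempty)
    (hsplit : ∃ x y, (delVerts G {v}).Adj x y)
    (hC4 : ¬ ∃ a b c d : V, a ≠ c ∧ b ≠ d ∧
        Gᶜ.Adj a b ∧ Gᶜ.Adj b c ∧ Gᶜ.Adj c d ∧ Gᶜ.Adj d a ∧
        ¬ Gᶜ.Adj a c ∧ ¬ Gᶜ.Adj b d) :
    Ideal.span ((fun w => (X v * X w : MvPolynomial V k)) '' G.neighborSet v) ⊓
        edgeIdeal k (delVerts G {v}) =
      Ideal.span {(X v : MvPolynomial V k)} * edgeIdeal k (splitSub G v) :=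
  stmt6_general k G v hC4
end

section
/- Let Δ be a simplicial complex, F a facet of Δ, Δ' = Δ∖F, and Ω = Δ∖conn_Δ(F) the subcomplex whose facets are the facets of Δ not connected to F. Then (F) ∩ I(Δ') = (F)·(I(conn̄_Δ(F)) + I(Ω)), where (F) is the principal ideal generated by the monomial ∏_{x∈F} x. -/
open MvPolynomial

variable {V : Type*}

/-- Two facets `F`, `G` of the complex with facet set `Δ` are connected if
there is a chain of facets `F = F₀, F₁, …, F_m = G` of `Δ` with
`Fᵢ ∩ Fᵢ₊₁ ≠ ∅` for all `i`. -/
def FacetConn [DecidableEq V] (Δ : Set (Finset V)) (F G : Finset V) : Prop :=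
  F ∈ Δ ∧ Relation.ReflTransGen
    (fun A B => A ∈ Δ ∧ B ∈ Δ ∧ (A ∩ B).Nonempty) F G

/-- `connComp Δ F` is the connected component of `F` in `Δ`: the subcomplex
whose facets are the facets of `Δ` connected to `F`. -/
def connComp [DecidableEq V] (Δ : Set (Finset V)) (F : Finset V) :
    Set (Finset V) :=
  {G | G ∈ Δ ∧ FacetConn Δ F G}

/-- The reduced connected component `conn̄_Δ(F)`: the facets are the sets
`G \ F` (for `G ≠ F` a facet of `conn_Δ(F)`) that are minimal under inclusion
among all such sets. -/
def reducedConn [DecidableEq V] (Δ : Set (Finset V)) (F : Finset V) :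
    Set (Finset V) :=
  {H | ∃ G ∈ connComp Δ F, G ≠ F ∧ H = G \ F ∧
    ∀ G' ∈ connComp Δ F, G' ≠ F → G' \ F ⊆ G \ F → G' \ F = G \ F}

/-- The facet ideal of the simplicial complex with facet set `Δ`: it is
generated by the monomials `∏_{x ∈ F} x` over the facets `F` of `Δ`. -/
noncomputable def facetIdeal (k : Type*) [Field k] [DecidableEq V]
    (Δ : Set (Finset V)) : Ideal (MvPolynomial V k) :=
  Ideal.span ((fun F : Finset V => ∏ x ∈ F, X x) '' Δ)

/-!
All ideals involved are squarefree monomial ideals, so an equality between them reduces to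
checking, for every finite set `s`, that `s` contains a generator of one iff it contains a
generator of the other. `(F) ∩ I(Δ')` is generated by the least common multiples `F ∪ G`, and
since the facets of `conn̄_Δ(F)` and of `Ω` are disjoint from `F`, the right-hand side is generated
by the sets `F ∪ H`. A facet `G ≠ F` connected to `F` contains `F ∪ H` for an inclusion-minimal
`H = G' \ F`, and a facet not connected to `F` already belongs to `Ω`.
-/

section MonomialIdeal

variable {R : Type*} [CommSemiring R]

lemma prod_X_eq_monomial_indicator (s : Finset V) :
    (∏ x ∈ s, X x : MvPolynomial V R) = monomial (Finsupp.indicator s fun _ _ => 1) 1 := by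
  simpa using prod_X_pow (R := R) (fun _ => 1) s

lemma Finsupp.indicator_one_le_iff [DecidableEq V] {s : Finset V} {m : V →₀ ℕ} :
    Finsupp.indicator s (fun _ _ => 1) ≤ m ↔ s ⊆ m.support := by
  simp only [Finsupp.le_def, Finsupp.indicator_apply, Finset.subset_iff, Finsupp.mem_support_iff]
  refine ⟨fun h x hx => ?_, fun h x => ?_⟩
  · simpa [hx, Nat.one_le_iff_ne_zero] using h x
  · split_ifs with hx
    · exact Nat.one_le_iff_ne_zero.mpr (h hx)
    · exact Nat.zero_le _

end MonomialIdeal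

section FacetIdeal

variable (k : Type*) [Field k] [DecidableEq V]

lemma mem_facetIdeal_iff {Γ : Set (Finset V)} {p : MvPolynomial V k} :
    p ∈ facetIdeal k Γ ↔ ∀ m ∈ p.support, ∃ G ∈ Γ, G ⊆ m.support := by
  have hmon : (fun F : Finset V => (∏ x ∈ F, X x : MvPolynomial V k)) =
      (fun s => monomial s 1) ∘ fun F => Finsupp.indicator F fun _ _ => 1 :=
    funext prod_X_eq_monomial_indicator
  rw [facetIdeal, hmon, Set.image_comp, mem_ideal_span_monomial_image]
  simp only [Set.exists_mem_image, Finsupp.indicator_one_le_iff]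

lemma facetIdeal_eq_of_exists_subset_iff {Γ₁ Γ₂ : Set (Finset V)}
    (h : ∀ s : Finset V, (∃ G ∈ Γ₁, G ⊆ s) ↔ ∃ G ∈ Γ₂, G ⊆ s) :
    facetIdeal k Γ₁ = facetIdeal k Γ₂ := by
  ext p
  simp only [mem_facetIdeal_iff, h]

lemma facetIdeal_union (Γ₁ Γ₂ : Set (Finset V)) :
    facetIdeal k (Γ₁ ∪ Γ₂) = facetIdeal k Γ₁ + facetIdeal k Γ₂ := by
  rw [facetIdeal, Set.image_union, Ideal.span_union]
  rfl

lemma span_prod_X_eq_facetIdeal_singleton (F : Finset V) :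
    Ideal.span {(∏ x ∈ F, X x : MvPolynomial V k)} = facetIdeal k {F} := by
  rw [facetIdeal, Set.image_singleton]

/-- The intersection of monomial ideals is generated by the least common multiples. -/
lemma span_prod_X_inf_facetIdeal (F : Finset V) (Γ : Set (Finset V)) :
    Ideal.span {(∏ x ∈ F, X x : MvPolynomial V k)} ⊓ facetIdeal k Γ =
      facetIdeal k ((F ∪ ·) '' Γ) := by
  ext p
  simp only [span_prod_X_eq_facetIdeal_singleton, Submodule.mem_inf, mem_facetIdeal_iff,
    Set.exists_mem_image, Set.mem_singleton_iff, exists_eq_left, Finset.union_subset_iff]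
  exact ⟨fun ⟨hF, hΓ⟩ m hm => (hΓ m hm).imp fun _ hG => ⟨hG.1, hF m hm, hG.2⟩,
    fun h => ⟨fun m hm => (h m hm).elim fun _ hG => hG.2.1,
      fun m hm => (h m hm).imp fun _ hG => ⟨hG.1, hG.2.2⟩⟩⟩

lemma span_prod_X_mul_facetIdeal {F : Finset V} {Γ : Set (Finset V)}
    (hdisj : ∀ H ∈ Γ, Disjoint F H) :
    Ideal.span {(∏ x ∈ F, X x : MvPolynomial V k)} * facetIdeal k Γ =
      facetIdeal k ((F ∪ ·) '' Γ) := by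
  rw [facetIdeal, facetIdeal, Ideal.span_mul_span', Set.singleton_mul, Set.image_image,
    Set.image_image]
  congr 1
  exact Set.image_congr fun H hH => (Finset.prod_union (hdisj H hH)).symm

end FacetIdeal

section Connectivity

variable [DecidableEq V] {Δ : Set (Finset V)} {F : Finset V}

lemma self_mem_connComp (hF : F ∈ Δ) : F ∈ connComp Δ F :=
  ⟨hF, hF, .refl⟩

lemma disjoint_of_not_mem_connComp (hF : F ∈ Δ) {G : Finset V} (hG : G ∈ Δ)
    (hGF : G ∉ connComp Δ F) : Disjoint F G := by
  rw [Finset.disjoint_iff_inter_eq_empty, ← Finset.not_nonempty_iff_eq_empty]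
  exact fun hne => hGF ⟨hG, hF, .single ⟨hF, hG, hne⟩⟩

lemma disjoint_of_mem_reducedConn {H : Finset V} (hH : H ∈ reducedConn Δ F) : Disjoint F H := by
  obtain ⟨G, -, -, rfl, -⟩ := hH
  exact Finset.disjoint_sdiff

lemma exists_mem_reducedConn_subset {G : Finset V} (hG : G ∈ connComp Δ F) (hGF : G ≠ F) :
    ∃ H ∈ reducedConn Δ F, H ⊆ G \ F := by
  obtain ⟨_, hle, ⟨G₀, hG₀, hG₀F, rfl⟩, hmin⟩ :=
    exists_minimal_le_of_wellFoundedLT (fun H => ∃ G' ∈ connComp Δ F, G' ≠ F ∧ H = G' \ F)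
      (G \ F) ⟨G, hG, hGF, rfl⟩
  exact ⟨G₀ \ F, ⟨G₀, hG₀, hG₀F, rfl, fun G' hG' hG'F hsub =>
    le_antisymm hsub (hmin ⟨G', hG', hG'F, rfl⟩ hsub)⟩, hle⟩

lemma exists_union_subset_iff (hF : F ∈ Δ) (s : Finset V) :
    (∃ G ∈ Δ \ {F}, F ∪ G ⊆ s) ↔
      ∃ H ∈ reducedConn Δ F ∪ (Δ \ connComp Δ F), F ∪ H ⊆ s := by
  constructor
  · rintro ⟨G, ⟨hGΔ, hGF⟩, hs⟩
    by_cases hG : G ∈ connComp Δ F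
    · obtain ⟨H, hH, hHG⟩ := exists_mem_reducedConn_subset hG hGF
      refine ⟨H, .inl hH, subset_trans ?_ hs⟩
      exact (Finset.union_subset_union_right hHG).trans Finset.union_sdiff_self_eq_union.le
    · exact ⟨G, .inr ⟨hGΔ, hG⟩, hs⟩
  · rintro ⟨H, hH | ⟨hHΔ, hH⟩, hs⟩
    · obtain ⟨G, hG, hGF, rfl, -⟩ := hH
      exact ⟨G, ⟨hG.1, hGF⟩, Finset.union_sdiff_self_eq_union.ge.trans hs⟩
    · exact ⟨H, ⟨hHΔ, by rintro rfl; exact hH (self_mem_connComp hF)⟩, hs⟩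

end Connectivity

theorem stmt9_general (k : Type*) [Field k] [DecidableEq V]
    (Δ : Set (Finset V)) (F : Finset V) (hF : F ∈ Δ) :
    Ideal.span {(∏ x ∈ F, X x : MvPolynomial V k)} ⊓ facetIdeal k (Δ \ {F}) =
      Ideal.span {(∏ x ∈ F, X x : MvPolynomial V k)} *
        (facetIdeal k (reducedConn Δ F) + facetIdeal k (Δ \ connComp Δ F)) := by
  have hdisj : ∀ H ∈ reducedConn Δ F ∪ (Δ \ connComp Δ F), Disjoint F H := by
    rintro H (hH | ⟨hHΔ, hH⟩)
    exacts [disjoint_of_mem_reducedConn hH, disjoint_of_not_mem_connComp hF hHΔ hH]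
  rw [← facetIdeal_union, span_prod_X_mul_facetIdeal k hdisj, span_prod_X_inf_facetIdeal]
  refine facetIdeal_eq_of_exists_subset_iff k fun s => ?_
  simpa only [Set.exists_mem_image] using exists_union_subset_iff hF s

/-- for a facet `F` of a simplicial complex `Δ`, with
`Δ' = Δ \ F` and `Ω = Δ \ conn_Δ(F)`, one has
`(F) ∩ I(Δ') = (F) · (I(conn̄_Δ(F)) + I(Ω))`. -/
theorem stmt9 (k : Type*) [Field k] [Fintype V] [DecidableEq V]
    (Δ : Set (Finset V)) (hne : ∀ F ∈ Δ, F.Nonempty)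
    (hac : IsAntichain (· ⊆ ·) Δ) (F : Finset V) (hF : F ∈ Δ) :
    Ideal.span {(∏ x ∈ F, X x : MvPolynomial V k)} ⊓ facetIdeal k (Δ \ {F}) =
      Ideal.span {(∏ x ∈ F, X x : MvPolynomial V k)} *
        (facetIdeal k (reducedConn Δ F) + facetIdeal k (Δ \ connComp Δ F)) :=
  stmt9_general k Δ F hF
end

section
/- Let Δ be a simplicial forest and let F be a facet of Δ. If the reduced connected component conn̄_Δ(F) has at least one facet, then conn̄_Δ(F) is a forest. -/
/-- A complex is connected if any two of its facets are connected. -/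
def IsConnComplex [DecidableEq V] (Δ : Set (Finset V)) : Prop :=
  ∀ F ∈ Δ, ∀ G ∈ Δ, FacetConn Δ F G

/-- A facet `F` of `Δ` is a leaf if either `F` is the only facet, or there is
a facet `G ≠ F` with `F ∩ F' ⊆ F ∩ G` for every facet `F' ≠ F`. -/
def IsLeaf [DecidableEq V] (Δ : Set (Finset V)) (F : Finset V) : Prop :=
  F ∈ Δ ∧ (Δ = {F} ∨ ∃ G ∈ Δ, G ≠ F ∧ ∀ F' ∈ Δ, F' ≠ F → F ∩ F' ⊆ F ∩ G)

/-- `Δ` is a tree if it is connected and every nonempty connected subcomplex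
of `Δ` (including `Δ` itself) has a leaf. -/
def IsTreeComplex [DecidableEq V] (Δ : Set (Finset V)) : Prop :=
  IsConnComplex Δ ∧
    ∀ Δ' ⊆ Δ, Δ'.Nonempty → IsConnComplex Δ' → ∃ F, IsLeaf Δ' F

/-- `Δ` is a forest if every connected component of `Δ` is a tree. -/
def IsForestComplex [DecidableEq V] (Δ : Set (Finset V)) : Prop :=
  ∀ F ∈ Δ, IsTreeComplex (connComp Δ F)

/-!
Every facet `H` of `conn̄_Δ(F)` has the form `G \ F` for a facet `G ≠ F` of `conn_Δ(F)`. Choosing one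
such `G` for each facet of a nonempty connected subcomplex `Γ` of `conn̄_Δ(F)` gives a subcomplex `Γ'`
of the tree `conn_Δ(F)` on which `G ↦ G \ F` is a bijection onto `Γ`. Since `G ∩ G' ⊇ (G \ F) ∩ (G' \ F)`,
`Γ'` is connected, so it has a leaf `G`, and removing `F` from every inclusion `G ∩ G'' ⊆ G ∩ G'`
witnessing this shows that `G \ F` is a leaf of `Γ`.
-/

open Set Relation

section

variable [DecidableEq V]

def FacetAdj (Δ : Set (Finset V)) (A B : Finset V) : Prop :=
  A ∈ Δ ∧ B ∈ Δ ∧ (A ∩ B).Nonempty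

instance (Δ : Set (Finset V)) : Std.Symm (FacetAdj Δ) :=
  ⟨fun _ _ ⟨hA, hB, hAB⟩ => ⟨hB, hA, by rwa [Finset.inter_comm]⟩⟩

theorem facetConn_iff {Δ : Set (Finset V)} {F G : Finset V} :
    FacetConn Δ F G ↔ F ∈ Δ ∧ ReflTransGen (FacetAdj Δ) F G :=
  Iff.rfl

theorem connComp_subset (Δ : Set (Finset V)) (F : Finset V) : connComp Δ F ⊆ Δ :=
  fun _ hG => hG.1

theorem reflTransGen_facetAdj_connComp {Δ : Set (Finset V)} {F G : Finset V} (hF : F ∈ Δ)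
    (h : ReflTransGen (FacetAdj Δ) F G) : ReflTransGen (FacetAdj (connComp Δ F)) F G := by
  induction h with
  | refl => exact .refl
  | tail hFA hAB ih => exact ih.tail ⟨⟨hAB.1, hF, hFA⟩, ⟨hAB.2.1, hF, hFA.tail hAB⟩, hAB.2.2⟩

theorem isConnComplex_connComp (Δ : Set (Finset V)) (F : Finset V) :
    IsConnComplex (connComp Δ F) := fun _ hG _ hG' =>
  ⟨hG, (symm (reflTransGen_facetAdj_connComp hG.2.1 hG.2.2)).trans
    (reflTransGen_facetAdj_connComp hG'.2.1 hG'.2.2)⟩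

theorem isForestComplex_of_forall_exists_isLeaf {Δ : Set (Finset V)}
    (h : ∀ Γ ⊆ Δ, Γ.Nonempty → IsConnComplex Γ → ∃ F, IsLeaf Γ F) : IsForestComplex Δ :=
  fun F _ => ⟨isConnComplex_connComp Δ F,
    fun Γ hΓ => h Γ (hΓ.trans (connComp_subset Δ F))⟩

theorem IsConnComplex.of_image {Δ : Set (Finset V)} {f : Finset V → Finset V}
    (hf : ∀ A, f A ⊆ A) (hinj : InjOn f Δ) (h : IsConnComplex (f '' Δ)) : IsConnComplex Δ := by
  intro G₁ hG₁ G₂ hG₂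
  let g := Function.invFunOn f Δ
  have hg : ∀ A ∈ f '' Δ, g A ∈ Δ ∧ A ⊆ g A := fun A hA =>
    ⟨Function.invFunOn_mem hA, (Function.invFunOn_eq hA).superset.trans (hf _)⟩
  have hgf : LeftInvOn g f Δ := hinj.leftInvOn_invFunOn
  have hchain : ReflTransGen (FacetAdj Δ) (g (f G₁)) (g (f G₂)) :=
    (facetConn_iff.1 (h _ (mem_image_of_mem f hG₁) _ (mem_image_of_mem f hG₂))).2.lift g
      fun A B ⟨hA, hB, hAB⟩ => ⟨(hg A hA).1, (hg B hB).1,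
        hAB.mono (Finset.inter_subset_inter (hg A hA).2 (hg B hB).2)⟩
  rw [hgf hG₁, hgf hG₂] at hchain
  exact ⟨hG₁, hchain⟩

theorem IsLeaf.image_sdiff {Δ : Set (Finset V)} {G : Finset V} (S : Finset V) (h : IsLeaf Δ G)
    (hinj : InjOn (· \ S) Δ) : IsLeaf ((· \ S) '' Δ) (G \ S) := by
  obtain ⟨hG, rfl | ⟨G', hG', hG'G, hleaf⟩⟩ := h
  · exact ⟨mem_image_of_mem _ hG, .inl image_singleton⟩
  refine ⟨mem_image_of_mem _ hG, .inr ⟨G' \ S, mem_image_of_mem _ hG',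
    fun he => hG'G (hinj hG' hG he), ?_⟩⟩
  rintro _ ⟨G'', hG'', rfl⟩ hne
  calc G \ S ∩ (G'' \ S) = (G ∩ G'') \ S := inf_sdiff.symm
    _ ⊆ (G ∩ G') \ S := Finset.sdiff_subset_sdiff (hleaf G'' hG'' fun h => hne (h ▸ rfl)) le_rfl
    _ = G \ S ∩ (G' \ S) := inf_sdiff

theorem reducedConn_subset_image_sdiff (Δ : Set (Finset V)) (F : Finset V) :
    reducedConn Δ F ⊆ (· \ F) '' connComp Δ F := by
  rintro _ ⟨G, hG, -, rfl, -⟩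
  exact mem_image_of_mem _ hG

end

theorem stmt11_general [DecidableEq V] (Δ : Set (Finset V))
    (hforest : IsForestComplex Δ) (F : Finset V) (hF : F ∈ Δ) :
    IsForestComplex (reducedConn Δ F) := by
  refine isForestComplex_of_forall_exists_isLeaf fun Γ hΓ hΓne hΓconn => ?_
  obtain ⟨Γ', hΓ'sub, hbij⟩ :=
    SurjOn.exists_bijOn_subset (hΓ.trans (reducedConn_subset_image_sdiff Δ F))
  rw [← hbij.image_eq] at hΓne hΓconn ⊢
  obtain ⟨G, hG⟩ := (hforest F hF).2 Γ' hΓ'sub hΓne.of_image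
    (hΓconn.of_image (fun _ => Finset.sdiff_subset) hbij.injOn)
  exact ⟨G \ F, hG.image_sdiff F hbij.injOn⟩

/-- if `Δ` is a simplicial forest and `F` is a facet of `Δ` whose
reduced connected component `conn̄_Δ(F)` has at least one facet, then
`conn̄_Δ(F)` is a forest. -/
theorem stmt11 [Fintype V] [DecidableEq V] (Δ : Set (Finset V))
    (hne : ∀ F ∈ Δ, F.Nonempty) (hac : IsAntichain (· ⊆ ·) Δ)
    (hforest : IsForestComplex Δ) (F : Finset V) (hF : F ∈ Δ)
    (hrc : (reducedConn Δ F).Nonempty) :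
    IsForestComplex (reducedConn Δ F) :=
  stmt11_general Δ hforest F hF
end
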